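/- Let μ_n and μ be finite measures on a measurable space such that μ_n(E) → μ(E) for every measurable set E, and suppose all measures are bounded by a common constant. Then for any measurable function f with 0 ≤ f ≤ M, the integrals converge: ∫ f dμ_n → ∫ f dμ. Specifically, |∫ f dμ_n − ∫ f dμ| ≤ M(ν_n⁺(S) + ν_n⁻(S)) where ν_n = μ_n − μ has Jordan decomposition ν_n⁺ − ν_n⁻, and ν_n^±(S) → 0 by the Hahn decomposition. -/

import Mathlib

/-!
By the layer cake formula, `∫⁻ f ∂ν = ∫⁻ t in Ioi 0, ν {f > t}`. Setwise convergence makes the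
integrand on the right converge pointwise in `t`, and dominated convergence in `t` applies: the
integrand vanishes for `t ≥ M` and is eventually bounded by `μ univ + 1`.
-/

open MeasureTheory Filter ENNReal Set Topology

section

variable {Ω : Type*} [MeasurableSpace Ω]

lemma measure_lt_le_indicator_Iio (ν : Measure Ω) {f : Ω → ℝ} {M : ℝ} (hfM : ∀ ω, f ω ≤ M)
    (t : ℝ) : ν {ω | t < f ω} ≤ (Iio M).indicator (fun _ ↦ ν univ) t := by
  by_cases ht : t < M
  · rw [indicator_of_mem (mem_Iio.2 ht)]
    exact measure_mono (subset_univ _)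
  · have : {ω | t < f ω} = ∅ := eq_empty_of_forall_notMem fun ω hω ↦ ht (hω.trans_le (hfM ω))
    simp [this]

theorem tendsto_lintegral_ofReal_of_tendsto_measure {ι : Type*} {l : Filter ι}
    [l.IsCountablyGenerated] {μs : ι → Measure Ω} {μ : Measure Ω} [IsFiniteMeasure μ]
    (hμs : ∀ E, MeasurableSet E → Tendsto (fun i ↦ μs i E) l (𝓝 (μ E)))
    {f : Ω → ℝ} (hf : Measurable f) (hf₀ : 0 ≤ f) {M : ℝ} (hfM : ∀ ω, f ω ≤ M) :
    Tendsto (fun i ↦ ∫⁻ ω, ENNReal.ofReal (f ω) ∂μs i) l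
      (𝓝 (∫⁻ ω, ENNReal.ofReal (f ω) ∂μ)) := by
  simp_rw [lintegral_eq_lintegral_meas_lt _ (Eventually.of_forall hf₀) hf.aemeasurable]
  have hμs_univ : ∀ᶠ i in l, μs i univ ≤ μ univ + 1 :=
    (hμs _ .univ).eventually_le_const (ENNReal.lt_add_right (measure_ne_top μ univ) one_ne_zero)
  refine tendsto_lintegral_filter_of_dominated_convergence ((Iio M).indicator fun _ ↦ μ univ + 1)
    (.of_forall fun i ↦ Antitone.measurable fun s t hst ↦ measure_mono fun ω hω ↦ hst.trans_lt hω)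
    ?_ ?_ (ae_of_all _ fun t ↦ hμs _ (measurableSet_lt measurable_const hf))
  · filter_upwards [hμs_univ] with i hi
    exact ae_of_all _ fun t ↦ (measure_lt_le_indicator_Iio _ hfM t).trans
      (indicator_le_indicator hi)
  · rw [lintegral_indicator_const measurableSet_Iio, Measure.restrict_apply measurableSet_Iio,
      Iio_inter_Ioi, Real.volume_Ioo]
    finiteness

end

theorem setwise_convergence_integral_general
    {Ω : Type*} [MeasurableSpace Ω] (μn : ℕ → Measure Ω) (μ : Measure Ω)
    (C : ℝ≥0∞) (hC : C ≠ ∞)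
    (hb : μ Set.univ ≤ C)
    (hconv : ∀ E : Set Ω, MeasurableSet E → Tendsto (fun n => μn n E) atTop (nhds (μ E)))
    (f : Ω → ℝ≥0∞) (hf : Measurable f)
    (M : ℝ≥0∞) (hM : M ≠ ∞) (hfM : ∀ ω, f ω ≤ M) :
    Tendsto (fun n => ∫⁻ ω, f ω ∂(μn n)) atTop (nhds (∫⁻ ω, f ω ∂μ)) := by
  have : IsFiniteMeasure μ := ⟨hb.trans_lt hC.lt_top⟩
  have hf_eq : f = fun ω ↦ ENNReal.ofReal (f ω).toReal :=
    funext fun ω ↦ (ofReal_toReal (ne_top_of_le_ne_top hM (hfM ω))).symm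
  rw [hf_eq]
  exact tendsto_lintegral_ofReal_of_tendsto_measure hconv hf.ennreal_toReal
    (fun ω ↦ toReal_nonneg) fun ω ↦ toReal_mono hM (hfM ω)

/-- Setwise convergence of uniformly bounded finite measures implies convergence of
(lower Lebesgue) integrals of uniformly bounded nonnegative measurable functions. -/
theorem setwise_convergence_integral
    {Ω : Type*} [MeasurableSpace Ω] (μn : ℕ → Measure Ω) (μ : Measure Ω)
    (C : ℝ≥0∞) (hC : C ≠ ∞)
    (hbn : ∀ n, μn n Set.univ ≤ C) (hb : μ Set.univ ≤ C)
    (hconv : ∀ E : Set Ω, MeasurableSet E → Tendsto (fun n => μn n E) atTop (nhds (μ E)))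
    (f : Ω → ℝ≥0∞) (hf : Measurable f)
    (M : ℝ≥0∞) (hM : M ≠ ∞) (hfM : ∀ ω, f ω ≤ M) :
    Tendsto (fun n => ∫⁻ ω, f ω ∂(μn n)) atTop (nhds (∫⁻ ω, f ω ∂μ)) :=
  setwise_convergence_integral_general μn μ C hC hb hconv f hf M hM hfM
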